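/- arXiv:0902.0195 — 5 statements merged into one kernel-verified Lean document; each statement's English description precedes it below -/
import Mathlib

section
/- Let a : FreeMonoid (Fin n) → ℝ≥0 with a(e) = 0, and define b : FreeMonoid (Fin n) → ℝ by b(α) = ∑_{j=1}^{|α|} ∑_{γ₁⋯γⱼ = α, each |γᵢ| ≥ 1} a(γ₁)a(γ₂)⋯a(γⱼ) for |α| ≥ 1 and b(e) = 1. Then for all α, β in the free monoid, b(αβ) ≥ b(α)·b(β). -/
open scoped NNReal

/-! Concatenating a factorization of `α` with one of `β` gives a factorization of `αβ`, distinct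
pairs giving distinct factorizations, and the product of the block values is multiplicative under
this concatenation. So the expansion of `b(α) b(β)` is a sub-sum of `b(αβ)`; the factorizations
with a block straddling the junction of `α` and `β` contribute the remaining, nonnegative, terms. -/

namespace Composition

variable {m n : ℕ}

theorem append_injective :
    Function.Injective fun p : Composition m × Composition n => p.1.append p.2 := by
  rintro ⟨c₁, c₂⟩ ⟨d₁, d₂⟩ h
  have hblocks : c₁.blocks ++ c₂.blocks = d₁.blocks ++ d₂.blocks :=
    congrArg Composition.blocks h
  suffices c₁.blocks = d₁.blocks by
    rw [this, List.append_cancel_left_eq] at hblocks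
    exact Prod.ext (Composition.ext this) (Composition.ext hblocks)
  -- The overhang between the two first parts sums to `m - m = 0`, so it has no (positive) blocks.
  have no_overhang {c d : Composition m} {t : List ℕ} (hcd : d.blocks = c.blocks ++ t) :
      t = [] := by
    have hsum : t.sum = 0 := by
      have := congrArg List.sum hcd
      rw [List.sum_append, c.blocks_sum, d.blocks_sum] at this
      omega
    refine List.eq_nil_iff_forall_not_mem.2 fun x hx => ?_
    have := d.blocks_pos (hcd ▸ List.mem_append_right _ hx)
    exact this.ne' (List.sum_eq_zero_iff.1 hsum x hx)
  rcases List.append_eq_append_iff.1 hblocks with ⟨t, hd, -⟩ | ⟨t, hc, -⟩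
  · rw [hd, no_overhang hd, List.append_nil]
  · rw [hc, no_overhang hc, List.append_nil]

end Composition

namespace List

variable {α : Type*}

theorem splitWrtCompositionAux_append (l₁ l₂ : List α) (ns₁ ns₂ : List ℕ)
    (h : ns₁.sum = l₁.length) :
    (l₁ ++ l₂).splitWrtCompositionAux (ns₁ ++ ns₂) =
      l₁.splitWrtCompositionAux ns₁ ++ l₂.splitWrtCompositionAux ns₂ := by
  induction ns₁ generalizing l₁ with
  | nil =>
    obtain rfl : l₁ = [] := length_eq_zero_iff.1 (by simpa using h.symm)
    simp [splitWrtCompositionAux]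
  | cons k ns ih =>
    rw [sum_cons] at h
    have hk : k ≤ l₁.length := by omega
    rw [cons_append, splitWrtCompositionAux_cons, splitWrtCompositionAux_cons,
      take_append_of_le_length hk, drop_append_of_le_length hk,
      ih _ (by rw [length_drop]; omega), cons_append]

theorem splitWrtComposition_append (l₁ l₂ : List α) (c₁ : Composition l₁.length)
    (c₂ : Composition l₂.length) :
    (l₁ ++ l₂).splitWrtComposition (c₁.append c₂) =
      l₁.splitWrtComposition c₁ ++ l₂.splitWrtComposition c₂ :=
  splitWrtCompositionAux_append l₁ l₂ c₁.blocks c₂.blocks c₁.blocks_sum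

end List

section CompositionSum

variable {α R : Type*} [CommSemiring R] [PartialOrder R] [IsOrderedRing R]

def compositionSum (f : List α → R) (l : List α) : R :=
  ∑ c : Composition l.length, ((l.splitWrtComposition c).map f).prod

theorem compositionSum_mul_le_append {f : List α → R} (hf : ∀ γ, 0 ≤ f γ) (l₁ l₂ : List α) :
    compositionSum f l₁ * compositionSum f l₂ ≤ compositionSum f (l₁ ++ l₂) := by
  let g : Composition l₁.length × Composition l₂.length → Composition (l₁ ++ l₂).length :=
    fun p => (p.1.append p.2).cast (List.length_append).symm
  have hg : Function.Injective g := fun p q h =>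
    Composition.append_injective (Composition.ext (congrArg Composition.blocks h :))
  have hsplit (p : Composition l₁.length × Composition l₂.length) :
      (l₁ ++ l₂).splitWrtComposition (g p) =
        l₁.splitWrtComposition p.1 ++ l₂.splitWrtComposition p.2 :=
    List.splitWrtComposition_append l₁ l₂ p.1 p.2
  calc compositionSum f l₁ * compositionSum f l₂
      = ∑ p, (((l₁ ++ l₂).splitWrtComposition (g p)).map f).prod := by
        simp only [compositionSum, Finset.sum_mul_sum, ← Fintype.sum_prod_type', hsplit,
          List.map_append, List.prod_append]
    _ = ∑ c ∈ Finset.univ.map ⟨g, hg⟩, (((l₁ ++ l₂).splitWrtComposition c).map f).prod := by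
        rw [Finset.sum_map]; rfl
    _ ≤ compositionSum f (l₁ ++ l₂) :=
        Finset.sum_le_sum_of_subset_of_nonneg (Finset.subset_univ _) fun c _ _ =>
          List.prod_nonneg (by simpa using fun γ _ => hf γ)

end CompositionSum

theorem stmt0_general {n : ℕ} (a : FreeMonoid (Fin n) → ℝ≥0)
    (b : FreeMonoid (Fin n) → ℝ)
    (hbe : b 1 = 1)
    (hb : ∀ α : FreeMonoid (Fin n), α ≠ 1 →
      b α = ∑ c : Composition (FreeMonoid.toList α).length,
        (((FreeMonoid.toList α).splitWrtComposition c).map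
          (fun γ => (a (FreeMonoid.ofList γ) : ℝ))).prod) :
    ∀ α β : FreeMonoid (Fin n), b α * b β ≤ b (α * β) := by
  intro α β
  rcases eq_or_ne α 1 with rfl | hα
  · simp [hbe]
  rcases eq_or_ne β 1 with rfl | hβ
  · simp [hbe]
  have hαβ : α * β ≠ 1 := fun h => hα (eq_one_of_mul_right' h)
  rw [hb α hα, hb β hβ, hb (α * β) hαβ]
  exact compositionSum_mul_le_append (fun γ => (a (FreeMonoid.ofList γ)).coe_nonneg)
    α.toList β.toList

/-- If `b α` is given by the sum over all factorizations of `α` into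
nonempty consecutive blocks (equivalently, over compositions of `|α|`) of the products
of the `a`-values of the blocks (with `b e = 1`), then `b` is supermultiplicative:
`b (α * β) ≥ b α * b β`. -/
theorem stmt0 {n : ℕ} (a : FreeMonoid (Fin n) → ℝ≥0) (ha : a 1 = 0)
    (b : FreeMonoid (Fin n) → ℝ)
    (hbe : b 1 = 1)
    (hb : ∀ α : FreeMonoid (Fin n), α ≠ 1 →
      b α = ∑ c : Composition (FreeMonoid.toList α).length,
        (((FreeMonoid.toList α).splitWrtComposition c).map
          (fun γ => (a (FreeMonoid.ofList γ) : ℝ))).prod) :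
    ∀ α β : FreeMonoid (Fin n), b α * b β ≤ b (α * β) :=
  stmt0_general a b hbe hb
end

section
/- Let b : FreeMonoid (Fin n) → ℝ satisfy b(α) > 0 for all α and b(αβ) ≥ b(α)b(β). For each generator gᵢ define the weighted shift Wᵢ on ℓ²(FreeMonoid (Fin n)) by Wᵢ(δ_α) = √(b(α)/b(gᵢα)) δ_{gᵢα}. Then each Wᵢ extends to a bounded operator with operator norm ‖Wᵢ‖ = 1/√(b(gᵢ)). -/
/-!
`Wᵢ f = extend (gᵢ * ·) (c • f) 0` is multiplication by the bounded weight sequence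
`c α = √(b α / b (gᵢ α))` followed by extension by zero along the injective map `α ↦ gᵢ α`,
an isometry of `ℓ^p`. Hence `‖Wᵢ‖ ≤ sup |c|`, and testing on basis vectors gives equality.
Supermultiplicativity gives `c α ≤ 1 / √(b gᵢ)`, with equality at `α = 1` since `b 1 = 1`.
-/

noncomputable instance {n : ℕ} : DecidableEq (FreeMonoid (Fin n)) := Classical.decEq _

open Function
open scoped ENNReal lp

theorem Function.Injective.extend_zero_single {ι κ E : Type*} [DecidableEq ι] [DecidableEq κ]
    [Zero E] {g : ι → κ} (hg : Injective g) (i : ι) (x : E) :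
    extend g (Pi.single i x) 0 = Pi.single (g i) x := by
  funext j
  by_cases hj : ∃ i', g i' = j
  · obtain ⟨i', rfl⟩ := hj
    simp only [hg.extend_apply, Pi.single_apply, hg.eq_iff]
  · rw [extend_apply' _ _ _ hj, Pi.zero_apply, Pi.single_eq_of_ne]
    rintro rfl
    exact hj ⟨i, rfl⟩

namespace lp

variable {ι κ 𝕜 E : Type*} [NontriviallyNormedField 𝕜] [NormedAddCommGroup E]
  [NormedSpace 𝕜 E] {p : ℝ≥0∞}

section ExtendZero

variable {g : ι → κ}

theorem norm_extend_zero_rpow (hp : 0 < p.toReal) (f : ι → E) (j : κ) :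
    ‖extend g f 0 j‖ ^ p.toReal = extend g (fun i => ‖f i‖ ^ p.toReal) 0 j := by
  rw [apply_extend (fun x : E => ‖x‖ ^ p.toReal)]
  congr 1
  funext j
  simp [Real.zero_rpow hp.ne']

theorem _root_.Memℓp.extend_zero (hp : 0 < p.toReal) (hg : Injective g) {f : ι → E}
    (hf : Memℓp f p) : Memℓp (extend g f 0) p := by
  refine memℓp_gen ?_
  simp_rw [norm_extend_zero_rpow hp]
  exact (summable_extend_zero hg).2 (hf.summable hp)

theorem tsum_norm_extend_zero_rpow (hp : 0 < p.toReal) (hg : Injective g) (f : ι → E) :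
    ∑' j, ‖extend g f 0 j‖ ^ p.toReal = ∑' i, ‖f i‖ ^ p.toReal := by
  simp_rw [norm_extend_zero_rpow hp]
  exact tsum_extend_zero hg _

variable (𝕜 E) in
noncomputable def extendZero [Fact (1 ≤ p)] (hp : 0 < p.toReal) (hg : Injective g) :
    ℓ^p(ι, E) →ₗᵢ[𝕜] ℓ^p(κ, E) where
  toFun f := ⟨extend g f 0, (lp.memℓp f).extend_zero hp hg⟩
  map_add' f f' := by
    ext j
    change extend g (⇑f + ⇑f') 0 j = extend g f 0 j + extend g f' 0 j
    simpa using congrFun (extend_add g (⇑f) f' 0 0) j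
  map_smul' c f := by ext1; simpa using extend_smul c g (⇑f) 0
  norm_map' f := by
    rw [norm_eq_tsum_rpow hp, norm_eq_tsum_rpow hp]
    exact congrArg (· ^ _) (tsum_norm_extend_zero_rpow hp hg f)

theorem extendZero_single [Fact (1 ≤ p)] [DecidableEq ι] [DecidableEq κ] (hp : 0 < p.toReal)
    (hg : Injective g) (i : ι) (x : E) :
    extendZero 𝕜 E hp hg (lp.single p i x) = lp.single p (g i) x := by
  ext1
  exact hg.extend_zero_single i x

end ExtendZero

section Diagonal

theorem _root_.Memℓp.infty_smul {c : ι → 𝕜} (hc : Memℓp c ∞) {f : ι → E}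
    (hf : Memℓp f p) : Memℓp (fun i => c i • f i) p := by
  obtain ⟨C, hC⟩ := hc.bddAbove
  refine (hf.norm.const_mul C).mono fun i => ?_
  rw [norm_smul]
  exact mul_le_mul_of_nonneg_right (hC ⟨i, rfl⟩) (norm_nonneg _)

variable [Fact (1 ≤ p)]

variable (E) in
noncomputable def diagonal (c : ℓ^∞(ι, 𝕜)) : ℓ^p(ι, E) →L[𝕜] ℓ^p(ι, E) :=
  LinearMap.mkContinuous
    { toFun f := ⟨fun i => c i • f i, (lp.memℓp c).infty_smul (lp.memℓp f)⟩
      map_add' f f' := by ext1; simp only [coeFn_add, Pi.add_apply, smul_add]; rfl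
      map_smul' a f := by
        ext1
        simp only [coeFn_smul, Pi.smul_apply, RingHom.id_apply]
        exact funext fun i => smul_comm (c i) a (f i) }
    ‖c‖ fun f => by
      have hp : p ≠ 0 := (zero_lt_one.trans_le Fact.out).ne'
      calc _ ≤ ‖‖c‖ • toNorm f‖ := norm_mono hp fun i => by
              simpa [norm_smul] using mul_le_mul_of_nonneg_right
                (norm_apply_le_norm ENNReal.top_ne_zero c i) (norm_nonneg (f i))
        _ = ‖c‖ * ‖f‖ := by rw [norm_const_smul hp, norm_toNorm, norm_norm]

theorem diagonal_single [DecidableEq ι] (c : ℓ^∞(ι, 𝕜)) (i : ι) (x : E) :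
    diagonal E c (lp.single p i x) = lp.single p i (c i • x) := by
  ext j
  rcases eq_or_ne j i with rfl | hji
  · simp [diagonal]
  · simp [diagonal, hji]

theorem norm_diagonal_le (c : ℓ^∞(ι, 𝕜)) :
    ‖(diagonal E c : ℓ^p(ι, E) →L[𝕜] ℓ^p(ι, E))‖ ≤ ‖c‖ :=
  LinearMap.mkContinuous_norm_le _ (norm_nonneg c) _

end Diagonal

section WeightedShift

variable [Fact (1 ≤ p)] {g : ι → κ}

variable (E) in
noncomputable def weightedShift (hp : 0 < p.toReal) (hg : Injective g) (c : ℓ^∞(ι, 𝕜)) :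
    ℓ^p(ι, E) →L[𝕜] ℓ^p(κ, E) :=
  (extendZero 𝕜 E hp hg).toContinuousLinearMap ∘L diagonal E c

theorem weightedShift_single [DecidableEq ι] [DecidableEq κ] (hp : 0 < p.toReal)
    (hg : Injective g) (c : ℓ^∞(ι, 𝕜)) (i : ι) (x : E) :
    weightedShift E hp hg c (lp.single p i x) = lp.single p (g i) (c i • x) := by
  simp [weightedShift, diagonal_single, extendZero_single]

theorem norm_weightedShift [Nontrivial E] (hp : 0 < p.toReal) (hg : Injective g)
    (c : ℓ^∞(ι, 𝕜)) : ‖weightedShift E hp hg c‖ = ‖c‖ := by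
  classical
  refine le_antisymm ?_ (norm_le_of_forall_le (norm_nonneg _) fun i => ?_)
  · calc ‖weightedShift E hp hg c‖
        ≤ ‖(extendZero 𝕜 E hp hg).toContinuousLinearMap‖ * ‖diagonal E c‖ :=
          ContinuousLinearMap.opNorm_comp_le _ _
      _ ≤ 1 * ‖c‖ := by
          gcongr
          · exact LinearIsometry.norm_toContinuousLinearMap_le _
          · exact norm_diagonal_le c
      _ = ‖c‖ := one_mul _
  · obtain ⟨x, hx⟩ := exists_ne (0 : E)
    have hp0 : 0 < p := ENNReal.toReal_pos_iff.1 hp |>.1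
    have hbound := (weightedShift E hp hg c).le_opNorm (lp.single p i x)
    rw [weightedShift_single, lp.norm_single hp0, lp.norm_single hp0, norm_smul] at hbound
    exact le_of_mul_le_mul_right hbound (norm_pos_iff.2 hx)

end WeightedShift

end lp

theorem sqrt_div_mul_le_one_div_sqrt {M : Type*} [Monoid M] {b : M → ℝ}
    (hbpos : ∀ α, 0 < b α) (hbmul : ∀ α β, b α * b β ≤ b (α * β)) (x α : M) :
    √(b α / b (x * α)) ≤ 1 / √(b x) := by
  calc √(b α / b (x * α)) ≤ √(1 / b x) := by
        refine Real.sqrt_le_sqrt ?_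
        rw [div_le_div_iff₀ (hbpos _) (hbpos _), one_mul, mul_comm]
        exact hbmul x α
    _ = 1 / √(b x) := by rw [one_div, one_div, Real.sqrt_inv]

/-- if `b` is positive and supermultiplicative (with `b e = 1`), then for each
generator `gᵢ` the weighted shift `δ_α ↦ √(b α / b (gᵢ α)) δ_{gᵢ α}` extends to a bounded
operator `W` on `ℓ²(FreeMonoid (Fin n))` with `‖W‖ = 1 / √(b gᵢ)`. -/
theorem stmt2 {n : ℕ} (b : FreeMonoid (Fin n) → ℝ)
    (hbpos : ∀ α, 0 < b α) (hbe : b 1 = 1)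
    (hbmul : ∀ α β, b α * b β ≤ b (α * β)) (i : Fin n) :
    ∃ W : lp (fun _ : FreeMonoid (Fin n) => ℂ) 2 →L[ℂ]
        lp (fun _ : FreeMonoid (Fin n) => ℂ) 2,
      (∀ α : FreeMonoid (Fin n),
        W (lp.single 2 α (1 : ℂ)) =
          (Real.sqrt (b α / b (FreeMonoid.of i * α)) : ℂ) •
            lp.single 2 (FreeMonoid.of i * α) (1 : ℂ)) ∧
      ‖W‖ = 1 / Real.sqrt (b (FreeMonoid.of i)) := by
  set w : FreeMonoid (Fin n) → ℂ := fun α => (√(b α / b (FreeMonoid.of i * α)) : ℂ)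
  have hw : ∀ α, ‖w α‖ ≤ 1 / √(b (FreeMonoid.of i)) := fun α => by
    rw [Complex.norm_real, Real.norm_of_nonneg (Real.sqrt_nonneg _)]
    exact sqrt_div_mul_le_one_div_sqrt hbpos hbmul _ α
  let c : ℓ^∞(FreeMonoid (Fin n), ℂ) :=
    ⟨w, memℓp_infty ⟨_, Set.forall_mem_range.2 hw⟩⟩
  have hc : ‖c‖ = 1 / √(b (FreeMonoid.of i)) := by
    refine le_antisymm (lp.norm_le_of_forall_le (by positivity) hw) ?_
    calc 1 / √(b (FreeMonoid.of i))
        = ‖c 1‖ := by simp [c, w, hbe, abs_of_nonneg (Real.sqrt_nonneg _)]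
      _ ≤ ‖c‖ := lp.norm_apply_le_norm ENNReal.top_ne_zero c 1
  refine ⟨lp.weightedShift ℂ (by norm_num) (mul_right_injective (FreeMonoid.of i)) c,
    fun α => ?_, by rw [lp.norm_weightedShift, hc]⟩
  rw [lp.weightedShift_single, ← lp.single_smul, smul_eq_mul, mul_one]
end

section
/- With the weighted shifts Wᵢ as above, for any word α = g_{i₁}⋯g_{i_k} define W_α = W_{i₁}⋯W_{i_k}. Then ‖W_α‖ = 1/√(b(α)). -/
/-!
On the basis vectors, `W_α` is the weighted shift `δ_β ↦ √(b β / b (α β)) δ_{α β}`: the weights of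
the letters multiply telescopically along the word. Since `β ↦ α β` is injective, the images of the
basis vectors are orthonormal, so by Parseval the norm of such a shift is the supremum of its
weights. Supermultiplicativity of `b` bounds every weight by `1 / √(b α)`, and `b e = 1` makes the
weight at `β = e` equal to that bound.
-/

open Function Filter

section

variable {𝕜 E F : Type*} [RCLike 𝕜] [NormedAddCommGroup E] [InnerProductSpace 𝕜 E]
  [NormedAddCommGroup F] [InnerProductSpace 𝕜 F] {ι κ : Type*}

theorem Orthonormal.norm_sum_smul_sq {v : ι → E} (hv : Orthonormal 𝕜 v) (c : ι → 𝕜)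
    (s : Finset ι) : ‖∑ i ∈ s, c i • v i‖ ^ 2 = ∑ i ∈ s, ‖c i‖ ^ 2 := by
  simpa only [LinearIsometry.toSpanSingleton_apply] using hv.orthogonalFamily.norm_sum c s

theorem HilbertBasis.opNorm_le_of_apply_eq_smul (e : HilbertBasis ι 𝕜 E) {v : κ → F}
    (hv : Orthonormal 𝕜 v) {σ : ι → κ} (hσ : Injective σ) {w : ι → 𝕜} {T : E →L[𝕜] F}
    (hT : ∀ i, T (e i) = w i • v (σ i)) {C : ℝ} (hC : 0 ≤ C) (hw : ∀ i, ‖w i‖ ≤ C) :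
    ‖T‖ ≤ C := by
  refine T.opNorm_le_bound hC fun x => ?_
  -- Parseval on the partial sums of the expansion of `x`, then pass to the limit.
  have hpartial : ∀ s : Finset ι,
      ‖T (∑ i ∈ s, e.repr x i • e i)‖ ≤ C * ‖∑ i ∈ s, e.repr x i • e i‖ := by
    intro s
    have hTs : T (∑ i ∈ s, e.repr x i • e i) = ∑ i ∈ s, (e.repr x i * w i) • v (σ i) := by
      simp only [map_sum, map_smul, hT, smul_smul]
    refine (pow_le_pow_iff_left₀ (norm_nonneg _) (by positivity) two_ne_zero).1 ?_
    have hvσ := (hv.comp σ hσ).norm_sum_smul_sq (fun i => e.repr x i * w i) s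
    simp only [comp_apply] at hvσ
    rw [hTs, mul_pow, hvσ, e.orthonormal.norm_sum_smul_sq, Finset.mul_sum]
    gcongr with i
    rw [norm_mul, mul_pow, mul_comm]
    gcongr
    exact hw i
  have hclosed : IsClosed {y : E | ‖T y‖ ≤ C * ‖y‖} :=
    isClosed_le (by fun_prop) (by fun_prop)
  exact hclosed.mem_of_tendsto (e.hasSum_repr x) (Eventually.of_forall hpartial)

theorem HilbertBasis.norm_le_opNorm_of_apply_eq_smul (e : HilbertBasis ι 𝕜 E) {v : κ → F}
    (hv : Orthonormal 𝕜 v) {σ : ι → κ} {w : ι → 𝕜} {T : E →L[𝕜] F}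
    (hT : ∀ i, T (e i) = w i • v (σ i)) (i : ι) : ‖w i‖ ≤ ‖T‖ := by
  simpa [hT, norm_smul, hv.norm_eq_one, e.orthonormal.norm_eq_one] using T.le_opNorm (e i)

theorem HilbertBasis.default_apply [DecidableEq ι] (i : ι) :
    (default : HilbertBasis ι 𝕜 (lp (fun _ : ι => 𝕜) 2)) i = lp.single 2 i 1 := by
  rw [← HilbertBasis.repr_symm_single]
  rfl

end

section WeightedShift

variable {𝕜 : Type*} [RCLike 𝕜] {ι κ μ : Type*} [DecidableEq ι] [DecidableEq κ] [DecidableEq μ]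

def IsWeightedShift (σ : ι → κ) (w : ι → 𝕜)
    (T : lp (fun _ : ι => 𝕜) 2 →L[𝕜] lp (fun _ : κ => 𝕜) 2) : Prop :=
  ∀ i, T (lp.single 2 i 1) = w i • lp.single 2 (σ i) 1

namespace IsWeightedShift

variable {σ : ι → κ} {w : ι → 𝕜} {T : lp (fun _ : ι => 𝕜) 2 →L[𝕜] lp (fun _ : κ => 𝕜) 2}

theorem comp {τ : κ → μ} {v : κ → 𝕜} {S : lp (fun _ : κ => 𝕜) 2 →L[𝕜] lp (fun _ : μ => 𝕜) 2}
    (hS : IsWeightedShift τ v S) (hT : IsWeightedShift σ w T) :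
    IsWeightedShift (τ ∘ σ) (fun i => v (σ i) * w i) (S.comp T) := fun i => by
  rw [ContinuousLinearMap.comp_apply, hT, map_smul, hS, smul_smul, mul_comm, comp_apply]

theorem opNorm_le (hT : IsWeightedShift σ w T) (hσ : Injective σ) {C : ℝ} (hC : 0 ≤ C)
    (hw : ∀ i, ‖w i‖ ≤ C) : ‖T‖ ≤ C :=
  (default : HilbertBasis ι 𝕜 _).opNorm_le_of_apply_eq_smul
    ((default : HilbertBasis κ 𝕜 _).orthonormal) hσ
    (fun i => by simpa only [HilbertBasis.default_apply] using hT i) hC hw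

theorem norm_le_opNorm (hT : IsWeightedShift σ w T) (i : ι) : ‖w i‖ ≤ ‖T‖ :=
  (default : HilbertBasis ι 𝕜 _).norm_le_opNorm_of_apply_eq_smul
    ((default : HilbertBasis κ 𝕜 _).orthonormal)
    (fun i => by simpa only [HilbertBasis.default_apply] using hT i) i

end IsWeightedShift

end WeightedShift

theorem Real.sqrt_div_mul_sqrt_div {x y z : ℝ} (hx : 0 ≤ x) (hy : 0 < y) :
    √(y / z) * √(x / y) = √(x / z) := by
  rw [← Real.sqrt_mul' _ (by positivity), div_mul_div_cancel₀' hy.ne']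

section FreeMonoid

variable {A : Type*} [DecidableEq (FreeMonoid A)] {b : FreeMonoid A → ℝ}
  {W : A → lp (fun _ : FreeMonoid A => ℂ) 2 →L[ℂ] lp (fun _ : FreeMonoid A => ℂ) 2}

theorem isWeightedShift_lift (hbpos : ∀ α, 0 < b α)
    (hW : ∀ a, IsWeightedShift (FreeMonoid.of a * ·)
      (fun β => (√(b β / b (FreeMonoid.of a * β)) : ℂ)) (W a))
    (α : FreeMonoid A) :
    IsWeightedShift (α * ·) (fun β => (√(b β / b (α * β)) : ℂ)) (FreeMonoid.lift W α) := by
  induction α using FreeMonoid.inductionOn' with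
  | one =>
    intro β
    simp [div_self (hbpos β).ne']
  | of_mul a α ih =>
    intro β
    have h := (hW a).comp ih β
    simp only [comp_apply, ← mul_assoc, ← Complex.ofReal_mul,
      Real.sqrt_div_mul_sqrt_div (hbpos β).le (hbpos (α * β))] at h
    rwa [map_mul, FreeMonoid.lift_eval_of]

end FreeMonoid

/-- with the weighted shifts `Wᵢ(δ_β) = √(b β / b (gᵢ β)) δ_{gᵢ β}` (where
`b e = 1`, `b > 0`, `b(αβ) ≥ b(α)b(β)`), the product `W_α` of the shifts along a word `α`
has operator norm `1 / √(b α)`. -/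
theorem stmt3 {n : ℕ} (b : FreeMonoid (Fin n) → ℝ)
    (hbpos : ∀ α, 0 < b α) (hbe : b 1 = 1)
    (hbmul : ∀ α β, b α * b β ≤ b (α * β))
    (W : Fin n → (lp (fun _ : FreeMonoid (Fin n) => ℂ) 2 →L[ℂ]
        lp (fun _ : FreeMonoid (Fin n) => ℂ) 2))
    (hW : ∀ (i : Fin n) (β : FreeMonoid (Fin n)),
      W i (lp.single 2 β (1 : ℂ)) =
        (Real.sqrt (b β / b (FreeMonoid.of i * β)) : ℂ) •
          lp.single 2 (FreeMonoid.of i * β) (1 : ℂ)) :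
    ∀ α : FreeMonoid (Fin n),
      ‖FreeMonoid.lift W α‖ = 1 / Real.sqrt (b α) := by
  intro α
  have hshift := isWeightedShift_lift hbpos hW α
  have hα := hbpos α
  refine le_antisymm (hshift.opNorm_le (mul_right_injective α) (by positivity) fun β => ?_) ?_
  · have hweight : b β / b (α * β) ≤ (b α)⁻¹ := by
      rw [div_le_iff₀ (hbpos _), inv_mul_eq_div, le_div_iff₀' hα]
      exact hbmul α β
    rw [Complex.norm_real, Real.norm_of_nonneg (Real.sqrt_nonneg _), one_div, ← Real.sqrt_inv]
    exact Real.sqrt_le_sqrt hweight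
  · simpa [hbe, abs_of_nonneg (Real.sqrt_nonneg _)] using hshift.norm_le_opNorm 1
end

section
/- With the weighted shifts Wᵢ as above, for any k ∈ ℕ and any finitely supported family of scalars (x_α) indexed by words of length k, the operator norm satisfies ‖∑_{|α|=k} x_α W_α‖ = √(∑_{|α|=k} |x_α|²/b(α)). -/
open scoped InnerProductSpace lp

section

variable {ι 𝕜 E F : Type*} [RCLike 𝕜] [NormedAddCommGroup E] [InnerProductSpace 𝕜 E]
  [NormedAddCommGroup F] [InnerProductSpace 𝕜 F]

theorem norm_sum_sq_eq_sum_norm_sq_of_pairwise {v : ι → E}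
    (hv : Pairwise fun i j => ⟪v i, v j⟫_𝕜 = 0) (s : Finset ι) :
    ‖∑ i ∈ s, v i‖ ^ 2 = ∑ i ∈ s, ‖v i‖ ^ 2 := by
  have h : ((‖∑ i ∈ s, v i‖ ^ 2 : ℝ) : 𝕜) = ∑ i ∈ s, ((‖v i‖ ^ 2 : ℝ) : 𝕜) := by
    push_cast
    simp only [← inner_self_eq_norm_sq_to_K, sum_inner, inner_sum]
    exact Finset.sum_congr rfl fun i hi => Finset.sum_eq_single_of_mem i hi fun j _ hji => hv hji
  exact_mod_cast h

theorem HilbertBasis.opNorm_le_of_pairwise_inner_eq_zero (e : HilbertBasis ι 𝕜 E)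
    (T : E →L[𝕜] F) {M : ℝ} (hM : 0 ≤ M)
    (horth : Pairwise fun i j => ⟪T (e i), T (e j)⟫_𝕜 = 0) (hle : ∀ i, ‖T (e i)‖ ≤ M) :
    ‖T‖ ≤ M := by
  refine T.opNorm_le_bound hM fun f => ?_
  have hpartial : ∀ s : Finset ι, ‖T (∑ i ∈ s, e.repr f i • e i)‖ ≤ M * ‖f‖ := by
    intro s
    refine (sq_le_sq₀ (norm_nonneg _) (by positivity)).1 ?_
    calc ‖T (∑ i ∈ s, e.repr f i • e i)‖ ^ 2
        = ∑ i ∈ s, ‖e.repr f i‖ ^ 2 * ‖T (e i)‖ ^ 2 := by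
          simp only [map_sum, map_smul]
          rw [norm_sum_sq_eq_sum_norm_sq_of_pairwise (𝕜 := 𝕜)]
          · simp only [norm_smul, mul_pow]
          · intro i j hij
            simp only [inner_smul_left, inner_smul_right, horth hij, mul_zero]
      _ ≤ ∑ i ∈ s, ‖e.repr f i‖ ^ 2 * M ^ 2 := by gcongr; exact hle _
      _ = M ^ 2 * ∑ i ∈ s, ‖⟪e i, f⟫_𝕜‖ ^ 2 := by
          simp only [e.repr_apply_apply, Finset.mul_sum, mul_comm]
      _ ≤ M ^ 2 * ‖f‖ ^ 2 := by gcongr; exact e.orthonormal.sum_inner_products_le f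
      _ = (M * ‖f‖) ^ 2 := by ring
  exact le_of_tendsto ((T.continuous.tendsto f).comp (e.hasSum_repr f)).norm
    (Filter.Eventually.of_forall hpartial)

theorem Orthonormal.norm_sum_smul_mul_right_sq {M : Type*} [Monoid M] [IsRightCancelMul M]
    {e : M → E} (he : Orthonormal 𝕜 e) (c : M → 𝕜) (s : Finset M) (β : M) :
    ‖∑ α ∈ s, c α • e (α * β)‖ ^ 2 = ∑ α ∈ s, ‖c α‖ ^ 2 :=
  (he.comp _ (mul_left_injective β)).orthogonalFamily.norm_sum c s

end

namespace FreeMonoid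

variable {A : Type*}

theorem mul_inj_of_length_eq {a b c d : FreeMonoid A} (h : a * b = c * d)
    (hl : a.length = c.length) : a = c ∧ b = d := by
  obtain ⟨hac, hbd⟩ := List.append_inj (congrArg toList h) hl
  exact ⟨toList.injective hac, toList.injective hbd⟩

theorem inner_sum_smul_mul_right_eq_zero {𝕜 E : Type*} [RCLike 𝕜] [NormedAddCommGroup E]
    [InnerProductSpace 𝕜 E] {e : FreeMonoid A → E} (he : Orthonormal 𝕜 e)
    {s : Finset (FreeMonoid A)} {k : ℕ} (hs : ∀ α ∈ s, α.length = k) (c d : FreeMonoid A → 𝕜)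
    {β γ : FreeMonoid A} (hβγ : β ≠ γ) :
    ⟪∑ α ∈ s, c α • e (α * β), ∑ α ∈ s, d α • e (α * γ)⟫_𝕜 = 0 := by
  simp only [sum_inner, inner_sum]
  refine Finset.sum_eq_zero fun α hα => Finset.sum_eq_zero fun α' hα' => ?_
  have hne : α' * β ≠ α * γ := fun h =>
    hβγ (mul_inj_of_length_eq h (by rw [hs α hα, hs α' hα'])).2
  rw [inner_smul_left, inner_smul_right, he.2 hne, mul_zero, mul_zero]

variable [DecidableEq (FreeMonoid A)] {b : FreeMonoid A → ℝ}
  {W : A → ℓ²(FreeMonoid A, ℂ) →L[ℂ] ℓ²(FreeMonoid A, ℂ)}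

theorem lift_apply_single (hb : ∀ α, 0 < b α)
    (hW : ∀ i β, W i (lp.single 2 β 1) =
      (√(b β / b (of i * β)) : ℂ) • lp.single 2 (of i * β) 1) (α β : FreeMonoid A) :
    lift W α (lp.single 2 β 1) = (√(b β / b (α * β)) : ℂ) • lp.single 2 (α * β) 1 := by
  induction α using FreeMonoid.recOn with
  | one => simp [div_self (hb β).ne']
  | of_mul i α ih =>
    have htelescope : √(b β / b (α * β)) * √(b (α * β) / b (of i * (α * β))) =
        √(b β / b (of i * (α * β))) := by
      rw [← Real.sqrt_mul (div_nonneg (hb β).le (hb _).le),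
        div_mul_div_cancel₀ (hb _).ne']
    rw [map_mul, mul_apply_eq_comp, ih, map_smul, lift_eval_of, hW, smul_smul,
      ← Complex.ofReal_mul, htelescope, mul_assoc]

end FreeMonoid

/-- with the weighted shifts `Wᵢ(δ_β) = √(b β / b (gᵢ β)) δ_{gᵢ β}`, for any
`k` and any finitely supported family of scalars `(x_α)` supported on words of length `k`,
`‖∑_{|α| = k} x_α W_α‖ = √(∑_{|α| = k} |x_α|² / b α)`. -/
theorem stmt4 {n : ℕ} (b : FreeMonoid (Fin n) → ℝ)
    (hbpos : ∀ α, 0 < b α) (hbe : b 1 = 1)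
    (hbmul : ∀ α β, b α * b β ≤ b (α * β))
    (W : Fin n → (lp (fun _ : FreeMonoid (Fin n) => ℂ) 2 →L[ℂ]
        lp (fun _ : FreeMonoid (Fin n) => ℂ) 2))
    (hW : ∀ (i : Fin n) (β : FreeMonoid (Fin n)),
      W i (lp.single 2 β (1 : ℂ)) =
        (Real.sqrt (b β / b (FreeMonoid.of i * β)) : ℂ) •
          lp.single 2 (FreeMonoid.of i * β) (1 : ℂ))
    (k : ℕ) (x : FreeMonoid (Fin n) →₀ ℂ)
    (hx : ∀ α ∈ x.support, FreeMonoid.length α = k) :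
    ‖∑ α ∈ x.support, x α • (FreeMonoid.lift W α)‖ =
      Real.sqrt (∑ α ∈ x.support, ‖x α‖ ^ 2 / b α) := by
  set T := ∑ α ∈ x.support, x α • FreeMonoid.lift W α
  set e : HilbertBasis (FreeMonoid (Fin n)) ℂ ℓ²(FreeMonoid (Fin n), ℂ) := default
  have he (β) : e β = lp.single 2 β 1 := (e.repr_symm_single β).symm
  have hTe (β) : T (e β) = ∑ α ∈ x.support, (x α * √(b β / b (α * β)) : ℂ) • e (α * β) := by
    simp only [T, he, sum_apply, smul_apply, FreeMonoid.lift_apply_single hbpos hW, smul_smul]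
  have hnorm (β) : ‖T (e β)‖ ^ 2 = ∑ α ∈ x.support, ‖x α‖ ^ 2 * (b β / b (α * β)) := by
    rw [hTe, e.orthonormal.norm_sum_smul_mul_right_sq]
    refine Finset.sum_congr rfl fun α _ => ?_
    rw [norm_mul, mul_pow, Complex.norm_real, Real.norm_eq_abs, sq_abs,
      Real.sq_sqrt (div_nonneg (hbpos β).le (hbpos _).le)]
  have hle (β) : ‖T (e β)‖ ≤ √(∑ α ∈ x.support, ‖x α‖ ^ 2 / b α) := by
    refine Real.le_sqrt_of_sq_le ?_
    rw [hnorm]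
    gcongr with α
    rw [div_eq_mul_one_div (‖x α‖ ^ 2)]
    refine mul_le_mul_of_nonneg_left ?_ (sq_nonneg _)
    rw [div_le_div_iff₀ (hbpos _) (hbpos _), one_mul, mul_comm]
    exact hbmul α β
  have hone : ‖T (e 1)‖ = √(∑ α ∈ x.support, ‖x α‖ ^ 2 / b α) := by
    rw [← Real.sqrt_sq (norm_nonneg _), hnorm]
    simp only [hbe, mul_one, mul_one_div]
  refine le_antisymm (e.opNorm_le_of_pairwise_inner_eq_zero T (Real.sqrt_nonneg _)
    (fun β γ hβγ => ?_) hle) (hone ▸ T.unit_le_opNorm _ (e.orthonormal.1 1).le)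
  show ⟪T (e β), T (e γ)⟫_ℂ = 0
  rw [hTe, hTe]
  exact FreeMonoid.inner_sum_smul_mul_right_eq_zero e.orthonormal hx _ _ hβγ
end

section
/- Consider the domain D_f(ℂ) = { (λ₁, λ₂) ∈ ℂ² : |λ₁|² + |λ₂|² + |λ₁λ₂|² < 1 }. Then D_f(ℂ) is not linearly equivalent to the bidisc { |z| < 1, |w| < 1 }, nor to the unit ball { |z|² + |w|² < 1 }: there is no invertible linear map L : ℂ² → ℂ² with L(D_f(ℂ)) equal to either of these domains. -/
/-!
Write `D = {ρ < 1}` with `ρ(z) = |z₀|² + |z₁|² + |z₀z₁|²`.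

If a linear `T` carried `D` onto the bidisc, then `u = T⁻¹e₀` and `v = T⁻¹e₁` lie outside `D`
while `s(ζu + v) ∈ D` for `|ζ| = 1` and `s < 1`. Averaging `ρ(ζu + v)` over the fourth roots of
unity gives at least `ρ(u) + ρ(v) ≥ 2`, and `ρ(s w) ≥ s⁴ ρ(w)`, so `s = 9/10` gives a contradiction.

If `T` carried `D` onto the Euclidean ball, `‖T ·‖` would satisfy the parallelogram law; the points
`(19/20)eᵢ ∈ D` and `(2/3)(e₀ ± e₁) ∉ D` are incompatible with it.
-/

open Complex

noncomputable def dfRho (z : Fin 2 → ℂ) : ℝ := ‖z 0‖ ^ 2 + ‖z 1‖ ^ 2 + ‖z 0 * z 1‖ ^ 2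

def dfDomain : Set (Fin 2 → ℂ) := {z | dfRho z < 1}

theorem dfRho_smul (c : ℂ) (z : Fin 2 → ℂ) :
    dfRho (c • z) = ‖c‖ ^ 2 * (‖z 0‖ ^ 2 + ‖z 1‖ ^ 2) + ‖c‖ ^ 4 * ‖z 0 * z 1‖ ^ 2 := by
  simp only [dfRho, Pi.smul_apply, smul_eq_mul, norm_mul]
  ring

theorem pow_four_mul_dfRho_le {c : ℂ} (hc : ‖c‖ ≤ 1) (z : Fin 2 → ℂ) :
    ‖c‖ ^ 4 * dfRho z ≤ dfRho (c • z) := by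
  have h42 : ‖c‖ ^ 4 ≤ ‖c‖ ^ 2 := pow_le_pow_of_le_one (norm_nonneg c) hc (by norm_num)
  rw [dfRho_smul, dfRho]
  nlinarith [sq_nonneg ‖z 0‖, sq_nonneg ‖z 1‖]

/-- Averaging over the fourth roots of unity kills every cross term except `u 0 * v 1 + u 1 * v 0`. -/
theorem sum_dfRho_rotate (u v : Fin 2 → ℂ) :
    dfRho (u + v) + dfRho (I • u + v) + dfRho ((-1 : ℂ) • u + v) + dfRho ((-I) • u + v)
      = 4 * (dfRho u + dfRho v + ‖u 0 * v 1 + u 1 * v 0‖ ^ 2) := by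
  simp only [dfRho, Pi.add_apply, Pi.smul_apply, smul_eq_mul, Complex.sq_norm,
    Complex.normSq_apply, Complex.add_re, Complex.add_im, Complex.mul_re, Complex.mul_im,
    Complex.neg_re, Complex.neg_im, Complex.I_re, Complex.I_im, Complex.one_re, Complex.one_im]
  ring

theorem exists_norm_eq_one_dfRho_add_le (u v : Fin 2 → ℂ) :
    ∃ ζ : ℂ, ‖ζ‖ = 1 ∧ dfRho u + dfRho v ≤ dfRho (ζ • u + v) := by
  by_contra! h
  have h1 := h 1 (by simp)
  have hI := h I (by simp)
  have hm1 := h (-1) (by simp)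
  have hmI := h (-I) (by simp)
  rw [one_smul] at h1
  nlinarith [sum_dfRho_rotate u v, sq_nonneg ‖u 0 * v 1 + u 1 * v 0‖]

theorem dfDomain_ne_preimage_bidisc (T : (Fin 2 → ℂ) ≃ₗ[ℂ] (Fin 2 → ℂ)) :
    dfDomain ≠ {z | ‖T z‖ < 1} := by
  intro h
  have hmem : ∀ z, dfRho z < 1 ↔ ‖T z‖ < 1 := fun z => Set.ext_iff.mp h z
  set u := T.symm (Pi.single 0 1)
  set v := T.symm (Pi.single 1 1)
  have hout : ∀ i, 1 ≤ dfRho (T.symm (Pi.single i 1)) := fun i => by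
    simp [← not_lt, hmem, Pi.norm_single]
  obtain ⟨ζ, hζ, hsum⟩ := exists_norm_eq_one_dfRho_add_le u v
  have hc : ‖(9 / 10 : ℂ)‖ = 9 / 10 := by norm_num
  have hw_in : dfRho ((9 / 10 : ℂ) • (ζ • u + v)) < 1 := by
    rw [hmem]
    simp only [u, v, map_smul, map_add, LinearEquiv.apply_symm_apply]
    rw [pi_norm_lt_iff one_pos, Fin.forall_fin_two]
    norm_num [hζ]
  have hw_out := pow_four_mul_dfRho_le (hc.trans_le (by norm_num)) (ζ • u + v)
  rw [hc] at hw_out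
  linarith [hout 0, hout 1]

theorem dfDomain_ne_preimage_innerProduct_ball {E : Type*} [NormedAddCommGroup E]
    [InnerProductSpace ℂ E] (T : (Fin 2 → ℂ) →ₗ[ℂ] E) : dfDomain ≠ {z | ‖T z‖ < 1} := by
  intro h
  have hmem : ∀ (c : ℂ) z, dfRho (c • z) < 1 ↔ ‖c‖ * ‖T z‖ < 1 := fun c z => by
    rw [← norm_smul, ← map_smul]
    exact Set.ext_iff.mp h _
  set p : Fin 2 → ℂ := Pi.single 0 1
  set q : Fin 2 → ℂ := Pi.single 1 1
  have hp := (hmem (19 / 20) p).mp (by norm_num [dfRho, p])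
  have hq := (hmem (19 / 20) q).mp (by norm_num [dfRho, q])
  have hadd := (hmem (2 / 3) (p + q)).not.mp (by norm_num [dfRho, p, q])
  have hsub := (hmem (2 / 3) (p - q)).not.mp (by norm_num [dfRho, p, q])
  norm_num at hp hq hadd hsub
  have hpar := parallelogram_law_with_norm ℂ (T p) (T q)
  nlinarith [norm_nonneg (T p), norm_nonneg (T q)]

/-- the domain `D_f(ℂ) = {(λ₁, λ₂) : |λ₁|² + |λ₂|² + |λ₁λ₂|² < 1}` is not
linearly equivalent to the bidisc nor to the unit ball of `ℂ²`: no invertible `ℂ`-linear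
map of `ℂ²` carries it onto either of those domains. -/
theorem stmt15
    (D : Set (Fin 2 → ℂ))
    (hD : D = {lam | ‖lam 0‖ ^ 2 + ‖lam 1‖ ^ 2 +
      ‖lam 0 * lam 1‖ ^ 2 < 1})
    (bidisc : Set (Fin 2 → ℂ))
    (hbidisc : bidisc = {z | ‖z 0‖ < 1 ∧ ‖z 1‖ < 1})
    (ball : Set (Fin 2 → ℂ))
    (hball : ball = {z | ‖z 0‖ ^ 2 + ‖z 1‖ ^ 2 < 1}) :
    ∀ L : (Fin 2 → ℂ) ≃ₗ[ℂ] (Fin 2 → ℂ),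
      (L : (Fin 2 → ℂ) → (Fin 2 → ℂ)) '' D ≠ bidisc ∧
      (L : (Fin 2 → ℂ) → (Fin 2 → ℂ)) '' D ≠ ball := by
  intro L
  have hpre : ∀ S, L '' D = S → dfDomain = L ⁻¹' S := fun S hS => by
    rw [← hS, Set.preimage_image_eq _ L.injective, hD]
    rfl
  constructor
  · refine fun hL => dfDomain_ne_preimage_bidisc L ((hpre _ hL).trans ?_)
    ext z
    simp [hbidisc, pi_norm_lt_iff one_pos, Fin.forall_fin_two]
  · refine fun hL => dfDomain_ne_preimage_innerProduct_ball
      ((WithLp.linearEquiv 2 ℂ (Fin 2 → ℂ)).symm.toLinearMap ∘ₗ L.toLinearMap)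
      ((hpre _ hL).trans ?_)
    ext z
    simp [hball, ← sq_lt_one_iff₀ (norm_nonneg _), EuclideanSpace.norm_sq_eq, Fin.sum_univ_two]
end
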